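/- Let L_β(s, v, θ) := L₀(s, v, θ) + β c(s) and let (β, θ) ↦ s̄^β(θ) be a smooth family of curves on [0,T] solving the Euler-Lagrange equation for L_β subject to fixed boundary positions s̄^β_0(θ) = α and s̄^β_T(θ) = γ for all (β, θ). Then the gradient of C(θ) = ∫₀ᵀ c(s̄^0_t(θ)) dt is d_θ C(θ) = lim_{β→0} (1/β) ∫₀ᵀ [∂_θ L_β(s̄^β_t, ṡ̄^β_t, θ) - ∂_θ L₀(s̄^0_t, ṡ̄^0_t, θ)] dt, with no boundary residual terms. -/

import Mathlib

/-!
Put `p = (β, θ)` and consider the action `A p = ∫₀ᵀ L_β(s̄^β(θ), ṡ̄^β(θ), θ) dt`. Because every curve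
solves the Euler-Lagrange equation and its endpoints do not move with `p`, integration by parts
leaves only the explicit parameter derivative: `DA p = ∫₀ᵀ ∂ₚL_β dt`. Its `β`-component is
`∫₀ᵀ c(s̄^β) dt`, its `θ`-component is `∫₀ᵀ ∂_θ L₀ dt`. Symmetry of the second derivative of `A` at
`(0, θ)` gives `∂_β ∫₀ᵀ ∂_θ L₀ dt = ∂_θ ∫₀ᵀ c(s̄^0) dt = ∇C(θ)`, and the estimator is the difference
quotient of the left-hand side.
-/

open scoped Topology
open Set Metric ContinuousLinearMap MeasureTheory InnerProductSpace

section ParametricIntegral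

variable {H Y : Type*} [NormedAddCommGroup H] [NormedSpace ℝ H]
  [NormedAddCommGroup Y] [NormedSpace ℝ Y] {F : H → ℝ → Y}

theorem continuous_fderiv_slice (hF : ContDiff ℝ 1 (fun q : H × ℝ => F q.1 q.2)) :
    Continuous (fun q : H × ℝ => fderiv ℝ (fun x => F x q.2) q.1) :=
  (ContDiff.fderiv (f := fun q x => F x q.2) (n := 0)
    (hF.comp (contDiff_snd.prodMk contDiff_fst.snd)) contDiff_fst (by norm_num)).continuous

theorem hasFDerivAt_intervalIntegral_of_contDiff [ProperSpace H]
    (hF : ContDiff ℝ 1 (fun q : H × ℝ => F q.1 q.2)) (a b : ℝ) (x₀ : H) :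
    HasFDerivAt (fun x => ∫ t in a..b, F x t)
      (∫ t in a..b, fderiv ℝ (fun x => F x t) x₀) x₀ := by
  have hF' := continuous_fderiv_slice hF
  obtain ⟨M, hM⟩ := ((isCompact_closedBall x₀ 1).prod (isCompact_uIcc (a := a) (b := b))
    ).exists_bound_of_continuousOn hF'.continuousOn
  have hslice (x : H) : Continuous (fun t => F x t) :=
    hF.continuous.comp (continuous_const.prodMk continuous_id)
  refine intervalIntegral.hasFDerivAt_integral_of_dominated_of_fderiv_le (bound := fun _ => M)
    (closedBall_mem_nhds x₀ one_pos)
    (.of_forall fun x => (hslice x).aestronglyMeasurable) ((hslice x₀).intervalIntegrable a b)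
    (hF'.comp (continuous_const.prodMk continuous_id)).aestronglyMeasurable
    (.of_forall fun t ht x hx => hM (x, t) ⟨hx, uIoc_subset_uIcc ht⟩) intervalIntegrable_const
    (.of_forall fun t _ x _ => ?_)
  exact ((hF.differentiable one_ne_zero).comp
    (differentiable_id.prodMk (differentiable_const t)) x).hasFDerivAt

end ParametricIntegral

section MixedPartials

variable {P E : Type*} [NormedAddCommGroup P] [NormedSpace ℝ P]
  [NormedAddCommGroup E] [NormedSpace ℝ E]

theorem hasDerivAt_comp_inr_comm {f : ℝ × P → E} {f' : ℝ × P → ℝ × P →L[ℝ] E}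
    {f'' : ℝ × P →L[ℝ] ℝ × P →L[ℝ] E} {x : ℝ} {y : P}
    (hf : ∀ q, HasFDerivAt f (f' q) q) (hf' : HasFDerivAt f' f'' (x, y)) :
    HasDerivAt (fun x' => (f' (x', y)).comp (inr ℝ ℝ P))
      (fderiv ℝ (fun y' => f' (x, y') (1, 0)) y) x := by
  have hx : HasDerivAt (fun x' => (f' (x', y)).comp (inr ℝ ℝ P))
      ((f'' (1, 0)).comp (inr ℝ ℝ P)) x := by
    have h : HasDerivAt (fun x' => f' (x', y)) (f'' (1, 0)) x :=
      hf'.comp_hasDerivAt x ((hasDerivAt_id x).prodMk (hasDerivAt_const x y))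
    simpa using h.clm_comp (hasDerivAt_const x (inr ℝ ℝ P))
  have hy : HasFDerivAt (fun y' => f' (x, y') (1, 0)) ((f''.flip (1, 0)).comp (inr ℝ ℝ P)) y := by
    have h : HasFDerivAt (fun y' => f' (x, y')) (f''.comp (inr ℝ ℝ P)) y :=
      hf'.comp y (hasFDerivAt_prodMk_right x y)
    convert h.clm_apply (hasFDerivAt_const ((1 : ℝ), (0 : P)) y) using 1
    ext w
    simp
  rw [hy.fderiv]
  convert hx using 1
  ext w
  exact second_derivative_symmetric hf hf' _ _

theorem contDiff_deriv_uncurry {S : P → ℝ → E} {n : WithTop ℕ∞}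
    (hS : ContDiff ℝ (n + 1) (fun q : P × ℝ => S q.1 q.2)) :
    ContDiff ℝ n (fun q : P × ℝ => deriv (S q.1) q.2) :=
  (ContDiff.fderiv (f := fun q t => S q.1 t) (hS.comp (contDiff_fst.fst.prodMk contDiff_snd))
    contDiff_snd le_rfl).clm_apply contDiff_const

theorem hasDerivAt_fderiv_uncurry_comm {S : P → ℝ → E}
    (hS : ContDiff ℝ 2 (fun q : P × ℝ => S q.1 q.2)) (p : P) (t : ℝ) :
    HasDerivAt (fun τ => fderiv ℝ (fun p' => S p' τ) p)
      (fderiv ℝ (fun p' => deriv (S p') t) p) t := by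
  set f : P × ℝ → E := fun q => S q.1 q.2
  have hf (q : P × ℝ) : HasFDerivAt f (fderiv ℝ f q) q :=
    (hS.differentiable two_ne_zero q).hasFDerivAt
  have hf' : HasFDerivAt (fderiv ℝ f) (fderiv ℝ (fderiv ℝ f) (p, t)) (p, t) :=
    ((hS.fderiv_right (m := 1) le_rfl).differentiable one_ne_zero (p, t)).hasFDerivAt
  have hslice (τ : ℝ) :
      fderiv ℝ (fun p' => S p' τ) p = (fderiv ℝ f (p, τ)).comp (inl ℝ P ℝ) := by
    have h := (hf (p, τ)).comp p (hasFDerivAt_prodMk_left (𝕜 := ℝ) p τ)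
    exact h.fderiv
  have hvel (p' : P) : deriv (S p') t = fderiv ℝ f (p', t) (0, 1) :=
    ((hf (p', t)).comp_hasDerivAt t ((hasDerivAt_const t p').prodMk (hasDerivAt_id t))).deriv
  have hp : HasFDerivAt (fun p' => deriv (S p') t)
      (((fderiv ℝ (fderiv ℝ f) (p, t)).comp (inl ℝ P ℝ)).flip (0, 1)) p := by
    simp_rw [hvel]
    convert (hf'.comp p (hasFDerivAt_prodMk_left (𝕜 := ℝ) p t)).clm_apply
      (hasFDerivAt_const ((0 : P), (1 : ℝ)) p) using 1 <;> simp
  have ht : HasDerivAt (fun τ => fderiv ℝ f (p, τ)) (fderiv ℝ (fderiv ℝ f) (p, t) (0, 1)) t :=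
    hf'.comp_hasDerivAt t ((hasDerivAt_const t p).prodMk (hasDerivAt_id t))
  simp_rw [hslice, hp.fderiv]
  convert ht.clm_comp (hasDerivAt_const t (inl ℝ P ℝ)) using 1
  ext u
  simpa using second_derivative_symmetric hf hf' (u, 0) (0, 1)

end MixedPartials

section Lagrangian

variable {P E G : Type*} [NormedAddCommGroup P] [NormedSpace ℝ P]
  [NormedAddCommGroup E] [NormedSpace ℝ E] [NormedAddCommGroup G] [NormedSpace ℝ G]

theorem contDiff_fderiv_lagrangian_param {ℓ : E → E → P → G} {n : WithTop ℕ∞}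
    (hℓ : ContDiff ℝ (n + 1) (fun q : (E × E) × P => ℓ q.1.1 q.1.2 q.2)) :
    ContDiff ℝ n (fun q : (E × E) × P => fderiv ℝ (ℓ q.1.1 q.1.2) q.2) :=
  ContDiff.fderiv (f := fun (q : (E × E) × P) p => ℓ q.1.1 q.1.2 p)
    (hℓ.comp (contDiff_fst.fst.prodMk contDiff_snd)) contDiff_snd le_rfl

theorem intervalIntegrable_fderiv_lagrangian_param {ℓ : E → E → P → G}
    (hℓ : ContDiff ℝ 1 (fun q : (E × E) × P => ℓ q.1.1 q.1.2 q.2)) {s : ℝ → E} (hs : ContDiff ℝ 1 s)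
    (p : P) (a b : ℝ) :
    IntervalIntegrable (fun t => fderiv ℝ (ℓ (s t) (deriv s t)) p) volume a b :=
  ((contDiff_fderiv_lagrangian_param (n := 0) hℓ).continuous.comp
    ((hs.continuous.prodMk (hs.continuous_deriv le_rfl)).prodMk
      continuous_const)).intervalIntegrable a b

theorem hasFDerivAt_lagrangian_comp {ℓ : E → E → P → G} {X V : P → E} {X' V' : P →L[ℝ] E}
    {p : P} (hℓ : DifferentiableAt ℝ (fun q : (E × E) × P => ℓ q.1.1 q.1.2 q.2) ((X p, V p), p))
    (hX : HasFDerivAt X X' p) (hV : HasFDerivAt V V' p) :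
    HasFDerivAt (fun p' => ℓ (X p') (V p') p')
      ((fderiv ℝ (fun x => ℓ x (V p) p) (X p)).comp X'
        + (fderiv ℝ (fun v => ℓ (X p) v p) (V p)).comp V' + fderiv ℝ (ℓ (X p) (V p)) p) p := by
  have hD := hℓ.hasFDerivAt
  have hx : HasFDerivAt (fun x => ℓ x (V p) p) _ (X p) :=
    hD.comp (f := fun x => ((x, V p), p)) (X p)
      (((hasFDerivAt_id (X p)).prodMk (hasFDerivAt_const (V p) (X p))).prodMk
        (hasFDerivAt_const p (X p)))
  have hv : HasFDerivAt (fun v => ℓ (X p) v p) _ (V p) :=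
    hD.comp (f := fun v => ((X p, v), p)) (V p)
      (((hasFDerivAt_const (X p) (V p)).prodMk (hasFDerivAt_id (V p))).prodMk
        (hasFDerivAt_const p (V p)))
  have hp : HasFDerivAt (ℓ (X p) (V p)) _ p :=
    hD.comp (f := fun p' => ((X p, V p), p')) p
      ((hasFDerivAt_const (X p, V p) p).prodMk (hasFDerivAt_id p))
  have h : HasFDerivAt (fun p' => ℓ (X p') (V p') p') _ p :=
    hD.comp (f := fun p' => ((X p', V p'), p')) p ((hX.prodMk hV).prodMk (hasFDerivAt_id p))
  rw [hx.fderiv, hv.fderiv, hp.fderiv]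
  convert h using 1
  ext u
  simp only [add_apply, coe_comp, Function.comp_apply, prod_apply, ← map_add]
  simp

/-- On shell, `∂ₚ[ℓ(S, Ṡ, p)] - ∂ₚℓ = d/dt (∂ᵥℓ ∘ ∂ₚS)`: the integrand of the first variation is a
total time derivative. -/
theorem hasDerivAt_momentum_comp_variation {ℓ : E → E → P → ℝ}
    (hℓ : ContDiff ℝ 1 (fun q : (E × E) × P => ℓ q.1.1 q.1.2 q.2))
    {S : P → ℝ → E} (hS : ContDiff ℝ 2 (fun q : P × ℝ => S q.1 q.2)) {p : P} {t : ℝ}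
    (hEL : HasDerivAt (fun τ => fderiv ℝ (fun v => ℓ (S p τ) v p) (deriv (S p) τ))
      (fderiv ℝ (fun x => ℓ x (deriv (S p) t) p) (S p t)) t) :
    HasDerivAt
      (fun τ => (fderiv ℝ (fun v => ℓ (S p τ) v p) (deriv (S p) τ)).comp
        (fderiv ℝ (fun p' => S p' τ) p))
      (fderiv ℝ (fun p' => ℓ (S p' t) (deriv (S p') t) p') p
        - fderiv ℝ (ℓ (S p t) (deriv (S p) t)) p) t := by
  have hS' : DifferentiableAt ℝ (fun p' => S p' t) p :=
    ((hS.differentiable two_ne_zero).comp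
      (differentiable_id.prodMk (differentiable_const t))).differentiableAt
  have hV : DifferentiableAt ℝ (fun p' => deriv (S p') t) p :=
    (((contDiff_deriv_uncurry hS).differentiable one_ne_zero).comp
      (differentiable_id.prodMk (differentiable_const t))).differentiableAt
  rw [(hasFDerivAt_lagrangian_comp (hℓ.differentiable one_ne_zero _) hS'.hasFDerivAt
    hV.hasFDerivAt).fderiv, add_sub_cancel_right]
  exact hEL.clm_comp (hasDerivAt_fderiv_uncurry_comm hS p t)

theorem hasFDerivAt_action_of_eulerLagrange [FiniteDimensional ℝ P] {ℓ : E → E → P → ℝ}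
    (hℓ : ContDiff ℝ 1 (fun q : (E × E) × P => ℓ q.1.1 q.1.2 q.2))
    {S : P → ℝ → E} (hS : ContDiff ℝ 2 (fun q : P × ℝ => S q.1 q.2)) {T : ℝ} (hT : 0 ≤ T)
    (hEL : ∀ p, ∀ t ∈ Icc 0 T,
      HasDerivAt (fun τ => fderiv ℝ (fun v => ℓ (S p τ) v p) (deriv (S p) τ))
        (fderiv ℝ (fun x => ℓ x (deriv (S p) t) p) (S p t)) t)
    {α γ : E} (h₀ : ∀ p, S p 0 = α) (h_T : ∀ p, S p T = γ) (p : P) :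
    HasFDerivAt (fun p => ∫ t in 0..T, ℓ (S p t) (deriv (S p) t) p)
      (∫ t in 0..T, fderiv ℝ (ℓ (S p t) (deriv (S p) t)) p) p := by
  have hV : ContDiff ℝ 1 (fun q : P × ℝ => deriv (S q.1) q.2) := contDiff_deriv_uncurry hS
  have hg : ContDiff ℝ 1 (fun q : P × ℝ => ℓ (S q.1 q.2) (deriv (S q.1) q.2) q.1) :=
    hℓ.comp (((hS.of_le one_le_two).prodMk hV).prodMk contDiff_fst)
  refine (hasFDerivAt_intervalIntegral_of_contDiff hg 0 T p).congr_fderiv ?_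
  have h₁ : IntervalIntegrable (fun t => fderiv ℝ (fun p' => ℓ (S p' t) (deriv (S p') t) p') p)
      volume 0 T :=
    ((continuous_fderiv_slice (F := fun p' t => ℓ (S p' t) (deriv (S p') t) p') hg).comp
      (continuous_const.prodMk continuous_id)).intervalIntegrable 0 T
  have h₂ := intervalIntegrable_fderiv_lagrangian_param hℓ (s := S p)
    ((hS.of_le one_le_two).comp (contDiff_const.prodMk contDiff_id)) p 0 T
  have hW (τ : ℝ) (hτ : ∀ p', S p' τ = S p τ) : fderiv ℝ (fun p' => S p' τ) p = 0 := by
    simp only [hτ, fderiv_const_apply]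
  have hboundary := intervalIntegral.integral_eq_sub_of_hasDerivAt
    (fun t ht => hasDerivAt_momentum_comp_variation hℓ hS (hEL p t (uIcc_of_le hT ▸ ht)))
    (h₁.sub h₂)
  rw [hW 0 fun p' => (h₀ p').trans (h₀ p).symm, hW T fun p' => (h_T p').trans (h_T p).symm,
    comp_zero, comp_zero, sub_zero, intervalIntegral.integral_sub h₁ h₂] at hboundary
  exact sub_eq_zero.mp hboundary

end Lagrangian

section Gradient

variable {F : Type*} [NormedAddCommGroup F] [InnerProductSpace ℝ F] [CompleteSpace F]
  {f g : F → ℝ} {x : F}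

theorem gradient_fun_add (hf : DifferentiableAt ℝ f x) (hg : DifferentiableAt ℝ g x) :
    gradient (fun y => f y + g y) x = gradient f x + gradient g x := by
  simp [gradient, fderiv_fun_add hf hg]

theorem gradient_const_mul (hf : DifferentiableAt ℝ f x) (b : ℝ) :
    gradient (fun y => b * f y) x = b • gradient f x := by
  simp [gradient, fderiv_const_mul hf b]

theorem gradient_add_const (b : ℝ) : gradient (fun y => f y + b) x = gradient f x := by
  simp [gradient, fderiv_add_const]

theorem hasDerivAt_fderiv_of_gradient_eulerLagrange {L : F → F → ℝ}
    (hL : ContDiff ℝ 2 (fun q : F × F => L q.1 q.2)) {s : ℝ → F} (hs : ContDiff ℝ 2 s) {t : ℝ}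
    (hEL : gradient (fun a => L a (deriv s t)) (s t)
      = deriv (fun τ => gradient (fun w => L (s τ) w) (deriv s τ)) t) :
    HasDerivAt (fun τ => fderiv ℝ (fun w => L (s τ) w) (deriv s τ))
      (fderiv ℝ (fun a => L a (deriv s t)) (s t)) t := by
  have hmom : ContDiff ℝ 1 (fun τ => fderiv ℝ (fun w => L (s τ) w) (deriv s τ)) :=
    ContDiff.fderiv (f := fun τ w => L (s τ) w)
      (hL.comp ((hs.comp contDiff_fst).prodMk contDiff_snd)) (hs.deriv' (n := 1)) le_rfl
  have hgrad : HasDerivAt (fun τ => gradient (fun w => L (s τ) w) (deriv s τ))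
      (gradient (fun a => L a (deriv s t)) (s t)) t := by
    rw [hEL]
    exact ((toDual ℝ F).symm.toContinuousLinearEquiv.differentiable.comp
      (hmom.differentiable one_ne_zero) t).hasDerivAt
  simpa [Function.comp_def, toDual_gradient] using
    (toDual ℝ F).toContinuousLinearEquiv.hasFDerivAt.comp_hasDerivAt t hgrad

end Gradient

/-- The paper's `L_β(x, v, θ)`, with `β` moved into the parameter `p = (β, θ)`. -/
def augmentedLagrangian {E Θ : Type*} (L₀ : E → E → Θ → ℝ) (c : E → ℝ) (x v : E) (p : ℝ × Θ) :
    ℝ :=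
  L₀ x v p.2 + p.1 * c x

theorem contDiff_augmentedLagrangian {E Θ : Type*} [NormedAddCommGroup E] [NormedSpace ℝ E]
    [NormedAddCommGroup Θ] [NormedSpace ℝ Θ] {L₀ : E → E → Θ → ℝ} {c : E → ℝ} {n : WithTop ℕ∞}
    (hL₀ : ContDiff ℝ n (fun q : (E × E) × Θ => L₀ q.1.1 q.1.2 q.2)) (hc : ContDiff ℝ n c) :
    ContDiff ℝ n (fun q : (E × E) × (ℝ × Θ) => augmentedLagrangian L₀ c q.1.1 q.1.2 q.2) :=
  (hL₀.comp (contDiff_fst.prodMk contDiff_snd.snd)).add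
    (contDiff_snd.fst.mul (hc.comp contDiff_fst.fst))

theorem fderiv_augmentedLagrangian_param {E Θ : Type*} [NormedAddCommGroup Θ] [NormedSpace ℝ Θ]
    {L₀ : E → E → Θ → ℝ} {c : E → ℝ} {x v : E} {p : ℝ × Θ}
    (hL₀ : DifferentiableAt ℝ (L₀ x v) p.2) :
    fderiv ℝ (augmentedLagrangian L₀ c x v) p
      = (fderiv ℝ (L₀ x v) p.2).comp (snd ℝ ℝ Θ) + c x • fst ℝ ℝ Θ :=
  ((hL₀.hasFDerivAt.comp p hasFDerivAt_snd).add (hasFDerivAt_fst.mul_const (c x))).fderiv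

theorem continuous_gradient_lagrangian_param {E Θ : Type*} [NormedAddCommGroup E] [NormedSpace ℝ E]
    [NormedAddCommGroup Θ] [InnerProductSpace ℝ Θ] [CompleteSpace Θ] {L₀ : E → E → Θ → ℝ}
    (hL₀ : ContDiff ℝ 1 (fun q : (E × E) × Θ => L₀ q.1.1 q.1.2 q.2)) {s : ℝ → E}
    (hs : ContDiff ℝ 1 s) (θ : Θ) :
    Continuous (fun t => gradient (L₀ (s t) (deriv s t)) θ) :=
  (toDual ℝ Θ).symm.continuous.comp ((contDiff_fderiv_lagrangian_param (n := 0) hL₀).continuous.comp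
    ((hs.continuous.prodMk (hs.continuous_deriv le_rfl)).prodMk continuous_const))

section AugmentedLagrangian

variable {E Θ : Type*} [NormedAddCommGroup E] [InnerProductSpace ℝ E] [CompleteSpace E]
  [NormedAddCommGroup Θ] [InnerProductSpace ℝ Θ] {L₀ : E → E → Θ → ℝ} {c : E → ℝ}

theorem hasDerivAt_fderiv_augmentedLagrangian
    (hL₀ : ContDiff ℝ 2 (fun q : (E × E) × Θ => L₀ q.1.1 q.1.2 q.2)) (hc : ContDiff ℝ 2 c)
    {s : ℝ → E} (hs : ContDiff ℝ 2 s) {β : ℝ} {θ : Θ} {t : ℝ}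
    (hEL : gradient (fun a => L₀ a (deriv s t) θ) (s t) + β • gradient c (s t)
      = deriv (fun τ => gradient (fun w => L₀ (s τ) w θ) (deriv s τ)) t) :
    HasDerivAt (fun τ => fderiv ℝ (fun v => augmentedLagrangian L₀ c (s τ) v (β, θ)) (deriv s τ))
      (fderiv ℝ (fun x => augmentedLagrangian L₀ c x (deriv s t) (β, θ)) (s t)) t := by
  refine hasDerivAt_fderiv_of_gradient_eulerLagrange
    (L := fun x v => augmentedLagrangian L₀ c x v (β, θ))
    ((contDiff_augmentedLagrangian hL₀ hc).comp (contDiff_id.prodMk contDiff_const)) hs ?_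
  have hx : DifferentiableAt ℝ (fun a => L₀ a (deriv s t) θ) (s t) :=
    ((hL₀.differentiable two_ne_zero).comp
      ((differentiable_id.prodMk (differentiable_const _)).prodMk (differentiable_const _))) _
  have hcx : DifferentiableAt ℝ c (s t) := hc.differentiable two_ne_zero _
  simp only [augmentedLagrangian, gradient_add_const]
  rwa [gradient_fun_add hx (hcx.const_mul β), gradient_const_mul hcx]

variable [FiniteDimensional ℝ Θ] {S : ℝ → Θ → ℝ → E} {T : ℝ}

theorem hasFDerivAt_augmentedAction (hT : 0 ≤ T)
    (hL₀ : ContDiff ℝ 2 (fun q : (E × E) × Θ => L₀ q.1.1 q.1.2 q.2)) (hc : ContDiff ℝ 2 c)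
    (hS : ContDiff ℝ 2 (fun q : ℝ × Θ × ℝ => S q.1 q.2.1 q.2.2))
    (hEL : ∀ (β : ℝ) (θ : Θ), ∀ t ∈ Icc 0 T,
      gradient (fun a => L₀ a (deriv (S β θ) t) θ) (S β θ t) + β • gradient c (S β θ t)
        = deriv (fun τ => gradient (fun w => L₀ (S β θ τ) w θ) (deriv (S β θ) τ)) t)
    {α γ : E} (hbdry : ∀ (β : ℝ) (θ : Θ), S β θ 0 = α ∧ S β θ T = γ) (p : ℝ × Θ) :
    HasFDerivAt
      (fun p : ℝ × Θ => ∫ t in 0..T, augmentedLagrangian L₀ c (S p.1 p.2 t) (deriv (S p.1 p.2) t) p)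
      (∫ t in 0..T, fderiv ℝ (augmentedLagrangian L₀ c (S p.1 p.2 t) (deriv (S p.1 p.2) t)) p) p :=
  hasFDerivAt_action_of_eulerLagrange ((contDiff_augmentedLagrangian hL₀ hc).of_le one_le_two)
    (S := fun p : ℝ × Θ => S p.1 p.2)
    (hS.comp (contDiff_fst.fst.prodMk (contDiff_fst.snd.prodMk contDiff_snd))) hT
    (fun p t ht => hasDerivAt_fderiv_augmentedLagrangian hL₀ hc
      (hS.comp (contDiff_const.prodMk (contDiff_const.prodMk contDiff_id))) (hEL p.1 p.2 t ht))
    (fun p => (hbdry p.1 p.2).1) (fun p => (hbdry p.1 p.2).2) p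

theorem hasDerivAt_integral_gradient_eq_gradient_cost (hT : 0 ≤ T)
    (hL₀ : ContDiff ℝ 2 (fun q : (E × E) × Θ => L₀ q.1.1 q.1.2 q.2)) (hc : ContDiff ℝ 2 c)
    (hS : ContDiff ℝ 2 (fun q : ℝ × Θ × ℝ => S q.1 q.2.1 q.2.2))
    (hEL : ∀ (β : ℝ) (θ : Θ), ∀ t ∈ Icc 0 T,
      gradient (fun a => L₀ a (deriv (S β θ) t) θ) (S β θ t) + β • gradient c (S β θ t)
        = deriv (fun τ => gradient (fun w => L₀ (S β θ τ) w θ) (deriv (S β θ) τ)) t)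
    {α γ : E} (hbdry : ∀ (β : ℝ) (θ : Θ), S β θ 0 = α ∧ S β θ T = γ) (θ : Θ) :
    HasDerivAt (fun β => ∫ t in 0..T, gradient (L₀ (S β θ t) (deriv (S β θ) t)) θ)
      (gradient (fun θ' => ∫ t in 0..T, c (S 0 θ' t)) θ) 0 := by
  set A : ℝ × Θ → ℝ → (ℝ × Θ →L[ℝ] ℝ) :=
    fun p t => fderiv ℝ (augmentedLagrangian L₀ c (S p.1 p.2 t) (deriv (S p.1 p.2) t)) p
  have hΓ : ContDiff ℝ 2 (fun q : (ℝ × Θ) × ℝ => S q.1.1 q.1.2 q.2) :=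
    hS.comp (contDiff_fst.fst.prodMk (contDiff_fst.snd.prodMk contDiff_snd))
  have hA : ContDiff ℝ 1 (fun q : (ℝ × Θ) × ℝ => A q.1 q.2) :=
    (contDiff_fderiv_lagrangian_param (contDiff_augmentedLagrangian hL₀ hc)).comp
      (((hΓ.of_le one_le_two).prodMk (contDiff_deriv_uncurry
        (S := fun p : ℝ × Θ => S p.1 p.2) (n := 1) hΓ)).prodMk contDiff_fst)
  have hcurve (p : ℝ × Θ) : ContDiff ℝ 1 (S p.1 p.2) :=
    (hS.of_le one_le_two).comp (contDiff_const.prodMk (contDiff_const.prodMk contDiff_id))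
  have hAint (p : ℝ × Θ) := intervalIntegrable_fderiv_lagrangian_param
    ((contDiff_augmentedLagrangian hL₀ hc).of_le one_le_two) (hcurve p) p 0 T
  have hL₀diff (x v : E) (θ' : Θ) : DifferentiableAt ℝ (L₀ x v) θ' :=
    ((hL₀.differentiable two_ne_zero).comp
      ((differentiable_const (x, v)).prodMk differentiable_id)) θ'
  have hpar (x v : E) (p : ℝ × Θ) := fderiv_augmentedLagrangian_param (c := c) (hL₀diff x v p.2)
  have hβ_component (θ' : Θ) : (∫ t in 0..T, A (0, θ') t) (1, 0) = ∫ t in 0..T, c (S 0 θ' t) := by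
    rw [intervalIntegral_apply (hAint _)]
    simp [hpar]
  have hθ_component (β : ℝ) : (∫ t in 0..T, A (β, θ) t).comp (inr ℝ ℝ Θ)
      = ∫ t in 0..T, fderiv ℝ (L₀ (S β θ t) (deriv (S β θ) t)) θ := by
    ext w
    rw [comp_apply, intervalIntegral_apply (hAint _), intervalIntegral_apply
      (intervalIntegrable_fderiv_lagrangian_param (hL₀.of_le one_le_two) (hcurve (β, θ)) θ 0 T)]
    simp [hpar]
  have h : HasDerivAt (fun β => (∫ t in 0..T, A (β, θ) t).comp (inr ℝ ℝ Θ))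
      (fderiv ℝ (fun θ' => (∫ t in 0..T, A (0, θ') t) (1, 0)) θ) 0 :=
    hasDerivAt_comp_inr_comm (hasFDerivAt_augmentedAction hT hL₀ hc hS hEL hbdry)
      (hasFDerivAt_intervalIntegral_of_contDiff hA 0 T (0, θ))
  simp_rw [hβ_component, hθ_component] at h
  convert (toDual ℝ Θ).symm.toContinuousLinearEquiv.hasFDerivAt.comp_hasDerivAt 0 h using 1
  · funext β
    exact (toDual ℝ Θ).symm.toLinearIsometry.intervalIntegral_comp_comm _
  · rfl

end AugmentedLagrangian

/-- CBVP gradient estimator of Generalized Lagrangian Equilibrium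
Propagation. If the Euler-Lagrange trajectories of the augmented Lagrangian
`L_β = L₀ + β c` have fixed boundary positions `α` at `t = 0` and `γ` at `t = T`
independent of `(β, θ)`, then the gradient of the cost is the `β → 0` limit of the
pure integral finite-difference estimator, with no boundary residual terms. -/
theorem cbvp_gradient_estimator
    {d k : ℕ} (T : ℝ) (hT : 0 < T)
    (L₀ : EuclideanSpace ℝ (Fin d) → EuclideanSpace ℝ (Fin d) → EuclideanSpace ℝ (Fin k) → ℝ)
    (hL₀ : ContDiff ℝ 2 (fun q : (EuclideanSpace ℝ (Fin d) × EuclideanSpace ℝ (Fin d))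
        × EuclideanSpace ℝ (Fin k) => L₀ q.1.1 q.1.2 q.2))
    (c : EuclideanSpace ℝ (Fin d) → ℝ) (hc : ContDiff ℝ 2 c)
    (S : ℝ → EuclideanSpace ℝ (Fin k) → ℝ → EuclideanSpace ℝ (Fin d))
    (hS : ContDiff ℝ 2 (fun q : ℝ × EuclideanSpace ℝ (Fin k) × ℝ => S q.1 q.2.1 q.2.2))
    -- each curve solves the Euler-Lagrange equation of the augmented Lagrangian L_β:
    (hEL : ∀ (β : ℝ) (θ : EuclideanSpace ℝ (Fin k)), ∀ t ∈ Set.Icc (0:ℝ) T,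
      gradient (fun a => L₀ a (deriv (S β θ) t) θ) (S β θ t) + β • gradient c (S β θ t)
        = deriv (fun τ => gradient (fun w => L₀ (S β θ τ) w θ) (deriv (S β θ) τ)) t)
    -- fixed boundary positions for all (β, θ):
    (α γ : EuclideanSpace ℝ (Fin d))
    (hbdry : ∀ (β : ℝ) (θ : EuclideanSpace ℝ (Fin k)), S β θ 0 = α ∧ S β θ T = γ)
    (C : EuclideanSpace ℝ (Fin k) → ℝ)
    (hC : ∀ θ, C θ = ∫ t in (0:ℝ)..T, c (S 0 θ t))
    (θ : EuclideanSpace ℝ (Fin k)) :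
    Filter.Tendsto
      (fun β : ℝ =>
        β⁻¹ •
          (∫ t in (0:ℝ)..T,
            (gradient (fun θ' => L₀ (S β θ t) (deriv (S β θ) t) θ' + β * c (S β θ t)) θ
              - gradient (fun θ' => L₀ (S 0 θ t) (deriv (S 0 θ) t) θ') θ)))
      (𝓝[≠] (0:ℝ)) (𝓝 (gradient C θ)) := by
  have hΦ := hasDerivAt_integral_gradient_eq_gradient_cost hT.le hL₀ hc hS hEL hbdry θ
  rw [← funext hC] at hΦ
  have hint (β : ℝ) :
      IntervalIntegrable (fun t => gradient (L₀ (S β θ t) (deriv (S β θ) t)) θ) volume 0 T :=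
    (continuous_gradient_lagrangian_param (hL₀.of_le one_le_two) ((hS.of_le one_le_two).comp
      (contDiff_const.prodMk (contDiff_const.prodMk contDiff_id))) θ).intervalIntegrable 0 T
  refine (hasDerivAt_iff_tendsto_slope.mp hΦ).congr fun β => ?_
  simp_rw [slope_def_module, sub_zero, gradient_add_const]
  rw [intervalIntegral.integral_sub (hint β) (hint 0)]
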